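/- Let E = [a,b] \subset (0, 2\pi) be an interval and \rho_E = 2\chi_E - 1 on the circle. Then the conjugate function satisfies exp((\pi/2) \tilde{\rho}_E(t)) = |sin((t-a)/2)| / |sin((t-b)/2)| for almost every t, and consequently exp((\pi/2) \tilde{\rho}_E) is not integrable on any neighborhood of b. -/

import Mathlib

/-!
On each interval where `ρ_E` is constant, `φ ↦ cot ((θ - φ) / 2)` has the primitive
`-2 log |sin ((θ - φ) / 2)|`. This primitive takes the same value at `θ - ε` and `θ + ε`, and at
`0` and `2π`, so for every small `ε` the truncated conjugate integral equals
`4 log |sin ((θ - a) / 2) / sin ((θ - b) / 2)|`, independently of `ε`; hence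
`ρ̃_E = (2 / π) log |sin ((θ - a) / 2) / sin ((θ - b) / 2)|`. Near `b` the exponential
`exp ((π / 2) ρ̃_E)` is then bounded below by a multiple of `1 / |t - b|`, which is not integrable.
-/

open Real Set MeasureTheory Filter

/-- `g` is the conjugate function of `f` (on the circle, parametrized by `[0, 2π]`):
for a.e. `θ`, the truncated conjugate integrals converge to `g θ`. -/
def IsConjugateFn (f g : ℝ → ℝ) : Prop :=
  ∀ᵐ θ ∂(volume.restrict (Set.Ioc 0 (2 * π))),
    Filter.Tendsto
      (fun ε : ℝ => (1 / (2 * π)) *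
        ∫ φ in Set.Ioc 0 (2 * π),
          if ε < |θ - φ| then Real.cos ((θ - φ) / 2) / Real.sin ((θ - φ) / 2) * f φ else 0)
      (nhdsWithin 0 (Set.Ioi 0)) (nhds (g θ))

noncomputable section

def rhoIcc (a b t : ℝ) : ℝ := if t ∈ Icc a b then 1 else -1

def truncCot (θ ε φ : ℝ) : ℝ :=
  if ε < |θ - φ| then cos ((θ - φ) / 2) / sin ((θ - φ) / 2) else 0

/- `Real.log` is even, so this is `-2 log |sin ((θ - φ) / 2)|`, a primitive of
`φ ↦ cot ((θ - φ) / 2)` on both sides of each zero of the sine. -/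
def cotPrimitive (θ φ : ℝ) : ℝ := -2 * log (sin ((θ - φ) / 2))

end

lemma truncCot_mul (θ ε φ c : ℝ) :
    truncCot θ ε φ * c = if ε < |θ - φ| then cos ((θ - φ) / 2) / sin ((θ - φ) / 2) * c else 0 := by
  simp only [truncCot, ite_mul, zero_mul]

lemma sin_half_ne_zero {x : ℝ} (h0 : x ≠ 0) (h2π : |x| < 2 * π) : sin (x / 2) ≠ 0 := by
  rw [abs_lt] at h2π
  rw [Ne, sin_eq_zero_iff_of_lt_of_lt (by linarith) (by linarith)]
  exact fun h ↦ h0 (by linarith)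

lemma hasDerivAt_cotPrimitive {θ φ : ℝ} (h : sin ((θ - φ) / 2) ≠ 0) :
    HasDerivAt (cotPrimitive θ) (cos ((θ - φ) / 2) / sin ((θ - φ) / 2)) φ := by
  have hlin : HasDerivAt (fun φ : ℝ ↦ (θ - φ) / 2) (-1 / 2) φ := by
    simpa using ((hasDerivAt_id φ).const_sub θ).div_const 2
  refine ((((hasDerivAt_sin _).comp φ hlin).log h).const_mul (-2)).congr_deriv ?_
  simp only [Function.comp_apply]
  ring

lemma cotPrimitive_sub_eq_add (θ ε : ℝ) : cotPrimitive θ (θ - ε) = cotPrimitive θ (θ + ε) := by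
  simp only [cotPrimitive, sub_sub_cancel, sub_add_cancel_left, neg_div, sin_neg, log_neg_eq_log]

lemma cotPrimitive_two_pi (θ : ℝ) : cotPrimitive θ (2 * π) = cotPrimitive θ 0 := by
  rw [cotPrimitive, cotPrimitive, show (θ - 2 * π) / 2 = θ / 2 - π by ring, sin_sub_pi,
    log_neg_eq_log, sub_zero]

section IntervalIntegral

variable {θ ε u v : ℝ}

lemma integral_truncCot_of_far (hε : 0 < ε) (huv : u ≤ v) (hθ : θ ≤ u - ε ∨ v + ε ≤ θ)
    (hu : θ - 2 * π < u) (hv : v < θ + 2 * π) :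
    IntervalIntegrable (truncCot θ ε) volume u v ∧
      ∫ φ in u..v, truncCot θ ε φ = cotPrimitive θ v - cotPrimitive θ u := by
  have hsin : ∀ φ ∈ Icc u v, sin ((θ - φ) / 2) ≠ 0 := fun φ hφ ↦ by
    refine sin_half_ne_zero ?_ (abs_lt.2 ⟨by linarith [hφ.2], by linarith [hφ.1]⟩)
    rcases hθ with h | h <;> linarith [hφ.1, hφ.2]
  have hcont : ContinuousOn (fun φ ↦ cos ((θ - φ) / 2) / sin ((θ - φ) / 2)) (Icc u v) :=
    ContinuousOn.div (by fun_prop) (by fun_prop) hsin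
  have heq : EqOn (truncCot θ ε) (fun φ ↦ cos ((θ - φ) / 2) / sin ((θ - φ) / 2)) (Ioo u v) :=
    fun φ hφ ↦ if_pos <| by
      rcases hθ with h | h
      · exact lt_abs.2 (Or.inr (by linarith [hφ.1]))
      · exact lt_abs.2 (Or.inl (by linarith [hφ.2]))
  refine ⟨(hcont.intervalIntegrable_of_Icc huv).congr_uIoo (uIoo_of_le huv ▸ heq.symm), ?_⟩
  rw [intervalIntegral.integral_congr_Ioo_of_le huv heq]
  refine intervalIntegral.integral_eq_sub_of_hasDerivAt (fun φ hφ ↦ ?_)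
    (hcont.intervalIntegrable_of_Icc huv)
  exact hasDerivAt_cotPrimitive (hsin φ (uIcc_of_le huv ▸ hφ))

lemma integral_truncCot_of_near (hε : 0 ≤ ε) :
    IntervalIntegrable (truncCot θ ε) volume (θ - ε) (θ + ε) ∧
      ∫ φ in (θ - ε)..(θ + ε), truncCot θ ε φ
        = cotPrimitive θ (θ + ε) - cotPrimitive θ (θ - ε) := by
  have hzero : EqOn (truncCot θ ε) 0 (uIcc (θ - ε) (θ + ε)) := fun φ hφ ↦ by
    rw [uIcc_of_le (by linarith)] at hφ
    exact if_neg (not_lt.2 (abs_le.2 ⟨by linarith [hφ.2], by linarith [hφ.1]⟩))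
  refine ⟨(intervalIntegrable_congr (hzero.mono uIoc_subset_uIcc)).2 .zero, ?_⟩
  rw [intervalIntegral.integral_congr hzero, cotPrimitive_sub_eq_add, sub_self]
  exact intervalIntegral.integral_zero

/- The excised interval `[θ - ε, θ + ε]` costs nothing since `cotPrimitive θ` takes the same
value at its two ends. -/
lemma integral_truncCot (hε : 0 < ε) (huv : u ≤ v) (hεu : ε < |θ - u|) (hεv : ε < |θ - v|)
    (hu : θ - 2 * π < u) (hv : v < θ + 2 * π) :
    IntervalIntegrable (truncCot θ ε) volume u v ∧
      ∫ φ in u..v, truncCot θ ε φ = cotPrimitive θ v - cotPrimitive θ u := by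
  by_cases hθ : u < θ ∧ θ < v
  · have hu' : u ≤ θ - ε := by linarith [abs_of_pos (sub_pos.2 hθ.1) ▸ hεu]
    have hv' : θ + ε ≤ v := by linarith [abs_of_neg (sub_neg.2 hθ.2) ▸ hεv]
    obtain ⟨hi₁, he₁⟩ := integral_truncCot_of_far (θ := θ) hε hu' (Or.inr (by linarith)) hu
      (by linarith)
    obtain ⟨hi₂, he₂⟩ := integral_truncCot_of_near (θ := θ) hε.le
    obtain ⟨hi₃, he₃⟩ := integral_truncCot_of_far (θ := θ) hε hv' (Or.inl (by linarith))
      (by linarith) hv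
    refine ⟨(hi₁.trans hi₂).trans hi₃, ?_⟩
    rw [← intervalIntegral.integral_add_adjacent_intervals (hi₁.trans hi₂) hi₃,
      ← intervalIntegral.integral_add_adjacent_intervals hi₁ hi₂, he₁, he₂, he₃]
    ring
  · refine integral_truncCot_of_far hε huv ?_ hu hv
    rw [not_and_or, not_lt, not_lt] at hθ
    rcases hθ with h | h
    · exact Or.inl (by linarith [abs_of_nonpos (sub_nonpos.2 h) ▸ hεu])
    · exact Or.inr (by linarith [abs_of_nonneg (sub_nonneg.2 h) ▸ hεv])

lemma intervalIntegral_mul_eq_const_mul {h ρ : ℝ → ℝ} {c : ℝ} (huv : u ≤ v)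
    (hh : IntervalIntegrable h volume u v) (hρ : EqOn ρ (fun _ ↦ c) (Ioo u v)) :
    IntervalIntegrable (fun φ ↦ h φ * ρ φ) volume u v ∧
      ∫ φ in u..v, h φ * ρ φ = c * ∫ φ in u..v, h φ := by
  have heq : EqOn (fun φ ↦ h φ * ρ φ) (fun φ ↦ c * h φ) (Ioo u v) := fun φ hφ ↦ by
    simp only [hρ hφ, mul_comm]
  refine ⟨(hh.const_mul c).congr_uIoo (uIoo_of_le huv ▸ heq.symm), ?_⟩
  rw [intervalIntegral.integral_congr_Ioo_of_le huv heq, intervalIntegral.integral_const_mul]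

end IntervalIntegral

lemma integral_truncCot_mul_rhoIcc {a b θ ε : ℝ} (ha : 0 < a) (hab : a < b) (hb : b < 2 * π)
    (hε : 0 < ε) (hεθ : ε < θ) (hεθ' : ε < 2 * π - θ) (hεa : ε < |θ - a|) (hεb : ε < |θ - b|) :
    ∫ φ in Ioc 0 (2 * π), truncCot θ ε φ * rhoIcc a b φ
      = 2 * (cotPrimitive θ b - cotPrimitive θ a) := by
  have hε0 : ε < |θ - 0| := by rwa [sub_zero, abs_of_pos (hε.trans hεθ)]
  have hε2π : ε < |θ - 2 * π| := by rw [abs_of_neg (by linarith)]; linarith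
  obtain ⟨hi₁, he₁⟩ := integral_truncCot hε ha.le hε0 hεa (by linarith) (by linarith)
  obtain ⟨hi₂, he₂⟩ := integral_truncCot hε hab.le hεa hεb (by linarith) (by linarith)
  obtain ⟨hi₃, he₃⟩ := integral_truncCot hε hb.le hεb hε2π (by linarith) (by linarith)
  obtain ⟨hj₁, hf₁⟩ := intervalIntegral_mul_eq_const_mul (c := -1) (ρ := rhoIcc a b) ha.le hi₁
    fun φ hφ ↦ if_neg fun h : φ ∈ Icc a b ↦ h.1.not_gt hφ.2
  obtain ⟨hj₂, hf₂⟩ := intervalIntegral_mul_eq_const_mul (c := 1) (ρ := rhoIcc a b) hab.le hi₂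
    fun φ hφ ↦ if_pos (Ioo_subset_Icc_self hφ)
  obtain ⟨hj₃, hf₃⟩ := intervalIntegral_mul_eq_const_mul (c := -1) (ρ := rhoIcc a b) hb.le hi₃
    fun φ hφ ↦ if_neg fun h : φ ∈ Icc a b ↦ h.2.not_gt hφ.1
  rw [← intervalIntegral.integral_of_le two_pi_pos.le,
    ← intervalIntegral.integral_add_adjacent_intervals (hj₁.trans hj₂) hj₃,
    ← intervalIntegral.integral_add_adjacent_intervals hj₁ hj₂, hf₁, hf₂, hf₃, he₁, he₂, he₃,
    cotPrimitive_two_pi]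
  ring

lemma conjugate_rhoIcc_eq {a b : ℝ} {g : ℝ → ℝ} (ha : 0 < a) (hab : a < b) (hb : b < 2 * π)
    (hg : IsConjugateFn (rhoIcc a b) g) :
    ∀ᵐ θ ∂(volume.restrict (Ioc 0 (2 * π))), g θ = (cotPrimitive θ b - cotPrimitive θ a) / π := by
  have hne (c : ℝ) := (volume.restrict (Ioc 0 (2 * π))).ae_ne c
  filter_upwards [hg, ae_restrict_mem measurableSet_Ioc, hne a, hne b, hne (2 * π)]
    with θ hlim hθ hθa hθb hθ2π
  refine tendsto_nhds_unique hlim (tendsto_const_nhds.congr' ?_)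
  have hsmall {d : ℝ} (hd : 0 < d) : ∀ᶠ ε in nhdsWithin 0 (Ioi 0), ε < d :=
    nhdsWithin_le_nhds (eventually_lt_nhds hd)
  filter_upwards [self_mem_nhdsWithin, hsmall hθ.1, hsmall (sub_pos.2 (hθ.2.lt_of_ne hθ2π)),
    hsmall (abs_sub_pos.2 hθa), hsmall (abs_sub_pos.2 hθb)] with ε hε hεθ hεθ' hεa hεb
  simp only [← truncCot_mul]
  rw [integral_truncCot_mul_rhoIcc ha hab hb hε hεθ hεθ' hεa hεb]
  field_simp

lemma exp_half_cotPrimitive_sub {θ a b : ℝ} (ha : sin ((θ - a) / 2) ≠ 0)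
    (hb : sin ((θ - b) / 2) ≠ 0) :
    exp ((cotPrimitive θ b - cotPrimitive θ a) / 2)
      = |sin ((θ - a) / 2)| / |sin ((θ - b) / 2)| := by
  rw [cotPrimitive, cotPrimitive, show ∀ x y : ℝ, (-2 * x - -2 * y) / 2 = y - x by intros; ring,
    exp_sub, exp_log_eq_abs ha, exp_log_eq_abs hb]

lemma lintegral_ofReal_inv_sub_eq_top {b u : ℝ} (hbu : b < u) :
    ∫⁻ t in Ioo b u, ENNReal.ofReal (t - b)⁻¹ = ⊤ := by
  by_contra hfin
  have hnonneg : 0 ≤ᵐ[volume.restrict (Ioo b u)] fun t ↦ (t - b)⁻¹ :=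
    (ae_restrict_iff' measurableSet_Ioo).2 <|
      ae_of_all _ fun t ht ↦ inv_nonneg.2 (sub_nonneg.2 ht.1.le)
  have hint : IntegrableOn (fun t ↦ (t - b)⁻¹) (Ioo b u) :=
    ⟨(by fun_prop : Measurable fun t : ℝ ↦ (t - b)⁻¹).aestronglyMeasurable,
      (hasFiniteIntegral_iff_ofReal hnonneg).2 (lt_top_iff_ne_top.2 hfin)⟩
  have hii := (intervalIntegrable_iff_integrableOn_Ioo_of_le hbu.le).2 hint
  rw [intervalIntegrable_sub_inv_iff] at hii
  exact hii.elim hbu.ne fun h ↦ h left_mem_uIcc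

lemma lintegral_eq_top_of_const_mul_inv_sub_le {f : ℝ → ℝ} {b c : ℝ} {s : Set ℝ} (hc : 0 < c)
    (hs : s ∈ nhdsWithin b (Ioi b)) (hf : ∀ᵐ t ∂(volume.restrict s), c * (t - b)⁻¹ ≤ f t) :
    ∫⁻ t in s, ENNReal.ofReal (f t) = ⊤ := by
  obtain ⟨u, hu, hsub⟩ := mem_nhdsGT_iff_exists_Ioo_subset.1 hs
  refine top_unique (le_trans ?_ (lintegral_mono_set hsub))
  calc ⊤ = ENNReal.ofReal c * ⊤ := (ENNReal.mul_top (ENNReal.ofReal_pos.2 hc).ne').symm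
    _ = ∫⁻ t in Ioo b u, ENNReal.ofReal c * ENNReal.ofReal (t - b)⁻¹ := by
      rw [lintegral_const_mul _ (by fun_prop), lintegral_ofReal_inv_sub_eq_top hu]
    _ ≤ ∫⁻ t in Ioo b u, ENNReal.ofReal (f t) := by
      refine lintegral_mono_ae ?_
      filter_upwards [ae_mono (Measure.restrict_mono hsub le_rfl) hf] with t ht
      rw [← ENNReal.ofReal_mul hc.le]
      exact ENNReal.ofReal_le_ofReal ht

lemma const_mul_inv_sub_le_abs_sin_div {a b c t : ℝ} (hbt : b < t) (ht : t < b + 2 * π)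
    (hc : c / 2 ≤ |sin ((t - a) / 2)|) :
    c * (t - b)⁻¹ ≤ |sin ((t - a) / 2)| / |sin ((t - b) / 2)| := by
  have hsin : |sin ((t - b) / 2)| ≤ (t - b) / 2 :=
    abs_sin_le_abs.trans_eq (abs_of_pos (by linarith))
  have hsin_pos : 0 < |sin ((t - b) / 2)| :=
    abs_pos.2 (sin_half_ne_zero (by linarith) (abs_lt.2 ⟨by linarith, by linarith⟩))
  calc c * (t - b)⁻¹ = (c / 2) / ((t - b) / 2) := by field_simp
    _ ≤ |sin ((t - a) / 2)| / |sin ((t - b) / 2)| := div_le_div₀ (abs_nonneg _) hc hsin_pos hsin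

lemma lintegral_eq_top_of_ae_eq_abs_sin_div {f : ℝ → ℝ} {a b ε : ℝ} (ha : 0 < a) (hab : a < b)
    (hb : b < 2 * π) (hε : 0 < ε)
    (hf : ∀ᵐ t ∂(volume.restrict (Ioc 0 (2 * π))),
      f t = |sin ((t - a) / 2)| / |sin ((t - b) / 2)|) :
    ∫⁻ t in Ioo (b - ε) (b + ε), ENNReal.ofReal (f t) = ⊤ := by
  set c := |sin ((b - a) / 2)|
  have hc : 0 < c :=
    abs_pos.2 (sin_half_ne_zero (by linarith) (abs_lt.2 ⟨by linarith, by linarith⟩))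
  have hopen : IsOpen {t : ℝ | c / 2 < |sin ((t - a) / 2)|} :=
    isOpen_lt continuous_const (by fun_prop)
  set s := Ioo b (min (b + ε) (2 * π)) ∩ {t : ℝ | c / 2 < |sin ((t - a) / 2)|}
  have hs : s ∈ nhdsWithin b (Ioi b) :=
    inter_mem (Ioo_mem_nhdsGT (lt_min (by linarith) hb))
      (mem_nhdsWithin_of_mem_nhds (hopen.mem_nhds (half_lt_self hc)))
  have hsub : s ⊆ Ioc 0 (2 * π) := fun t ht ↦
    ⟨by linarith [ht.1.1], (ht.1.2.trans_le (min_le_right _ _)).le⟩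
  have hbound : ∀ᵐ t ∂(volume.restrict s), c * (t - b)⁻¹ ≤ f t := by
    filter_upwards [ae_mono (Measure.restrict_mono hsub le_rfl) hf,
      ae_restrict_mem (measurableSet_Ioo.inter hopen.measurableSet)] with t hft ht
    rw [hft]
    exact const_mul_inv_sub_le_abs_sin_div ht.1.1
      (by linarith [ht.1.2.trans_le (min_le_right _ _)]) ht.2.le
  have hsε : s ⊆ Ioo (b - ε) (b + ε) := fun t ht ↦
    ⟨by linarith [ht.1.1], ht.1.2.trans_le (min_le_left _ _)⟩
  exact top_unique
    ((lintegral_eq_top_of_const_mul_inv_sub_le hc hs hbound).ge.trans (lintegral_mono_set hsε))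

/-- For an interval `E = [a,b] ⊂ (0,2π)` and `ρ_E = 2χ_E - 1`, the conjugate function
`g` of `ρ_E` satisfies `exp((π/2) g(t)) = |sin((t-a)/2)|/|sin((t-b)/2)|` a.e., and
`exp((π/2) g)` is not integrable on any neighborhood of `b`. -/
theorem exp_conj_indicator_interval (a b : ℝ) (ha : 0 < a) (hab : a < b) (hb : b < 2 * π)
    (g : ℝ → ℝ) (hg : IsConjugateFn (fun t => if t ∈ Set.Icc a b then 1 else -1) g) :
    (∀ᵐ t ∂(volume.restrict (Set.Ioc 0 (2 * π))),
        Real.exp (π / 2 * g t) = |Real.sin ((t - a) / 2)| / |Real.sin ((t - b) / 2)|) ∧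
      ∀ ε > (0 : ℝ),
        ∫⁻ t in Set.Ioo (b - ε) (b + ε), ENNReal.ofReal (Real.exp (π / 2 * g t)) = ⊤ := by
  have hexp : ∀ᵐ t ∂(volume.restrict (Ioc 0 (2 * π))),
      exp (π / 2 * g t) = |sin ((t - a) / 2)| / |sin ((t - b) / 2)| := by
    have hne (c : ℝ) := (volume.restrict (Ioc 0 (2 * π))).ae_ne c
    filter_upwards [conjugate_rhoIcc_eq ha hab hb hg, ae_restrict_mem measurableSet_Ioc,
      hne a, hne b] with t hgt ht hta htb
    have hsin {c : ℝ} (hc0 : 0 < c) (hc : c < 2 * π) (htc : t ≠ c) : sin ((t - c) / 2) ≠ 0 :=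
      sin_half_ne_zero (sub_ne_zero.2 htc) (abs_lt.2 ⟨by linarith [ht.1], by linarith [ht.2]⟩)
    rw [hgt, show ∀ x : ℝ, π / 2 * (x / π) = x / 2 from fun x ↦ by field_simp]
    exact exp_half_cotPrimitive_sub (hsin ha (hab.trans hb) hta) (hsin (ha.trans hab) hb htb)
  exact ⟨hexp, fun ε hε ↦ lintegral_eq_top_of_ae_eq_abs_sin_div ha hab hb hε hexp⟩
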